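/- The inverse of the almost-Riordan array (g, g f/x, f) is (1/(g∘f̄), (1/(g∘f̄))·(f̄/x), f̄); hence the subset of elements of the form (g, g f/x, f) is closed under inversion. -/

import Mathlib

open PowerSeries Finset

/-- Shift: `shift h = (h - h₀)/x`, i.e. the series with coefficients `h₁, h₂, …`. -/
noncomputable def shift (h : PowerSeries ℤ) : PowerSeries ℤ :=
  PowerSeries.mk fun n => coeff (n + 1) h

/-- Composition `h ∘ f` of formal power series (intended for `f` with zero constant term,
in which case `coeff n (f ^ k) = 0` for `k > n`). -/
noncomputable def comp (h f : PowerSeries ℤ) : PowerSeries ℤ :=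
  PowerSeries.mk fun n => ∑ k ∈ Finset.range (n + 1), coeff k h * coeff n (f ^ k)

/-- Action of an almost-Riordan array `(a,g,f)` on a power series `b`:
`(a,g,f)·b = b₀ a + x g b̃(f)` where `b̃ = (b - b₀)/x`. -/
noncomputable def act (a g f b : PowerSeries ℤ) : PowerSeries ℤ :=
  C (coeff 0 b) * a + X * g * comp (shift b) f

/-- Product of almost-Riordan arrays: `(a,g,f)·(b,u,v) = ((a,g,f)·b, g·u(f), v(f))`. -/
noncomputable def arMul (t s : PowerSeries ℤ × PowerSeries ℤ × PowerSeries ℤ) :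
    PowerSeries ℤ × PowerSeries ℤ × PowerSeries ℤ :=
  (act t.1 t.2.1 t.2.2 s.1, t.2.1 * comp s.2.1 t.2.2, comp s.2.2 t.2.2)

/-- `(a,g,f)` is an almost-Riordan array: `a₀ = 1`, `g₀ = 1`, `f₀ = 0`, `f₁ = 1`. -/
def isAR (t : PowerSeries ℤ × PowerSeries ℤ × PowerSeries ℤ) : Prop :=
  coeff 0 t.1 = 1 ∧ coeff 0 t.2.1 = 1 ∧ coeff 0 t.2.2 = 0 ∧ coeff 1 t.2.2 = 1

/-! The map `(g, f) ↦ (g, g f/x, f)` is a homomorphism from the Riordan group into the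
almost-Riordan group: `(g, g f/x, f)·(u, u v/x, v) = (g·u(f), g·u(f)·v(f)/x, v(f))`. This rests on
`u(f) = u₀ + f·ũ(f)` and `v(f)/x = (f/x)·ṽ(f)` for `f₀ = v₀ = 0`, where `ũ = (u - u₀)/x`.
The inverse of `(g, g f/x, f)` is therefore the image of the Riordan inverse `(1/(g∘f̄), f̄)`.
The composition `comp` agrees with `PowerSeries.subst`, whose algebra it inherits. -/

theorem coeff_pow_eq_zero_of_lt {R : Type*} [Semiring R] {f : PowerSeries R}
    (hf : constantCoeff f = 0) {n k : ℕ} (h : n < k) : coeff n (f ^ k) = 0 :=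
  coeff_of_lt_order n ((Nat.cast_lt.mpr h).trans_le (le_order_pow_of_constantCoeff_eq_zero k hf))

theorem hasSubst_of_coeff_zero {f : PowerSeries ℤ} (hf : coeff 0 f = 0) : HasSubst f :=
  HasSubst.of_constantCoeff_zero' (by rwa [← coeff_zero_eq_constantCoeff_apply])

theorem comp_eq_subst {f : PowerSeries ℤ} (hf : coeff 0 f = 0) (h : PowerSeries ℤ) :
    comp h f = h.subst f := by
  ext n
  rw [coeff_subst' (hasSubst_of_coeff_zero hf),
    finsum_eq_sum_of_support_subset (s := range (n + 1))]
  · simp [comp]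
  · intro k hk
    rw [coe_range, Set.mem_Iio]
    by_contra hnk
    have hf' : constantCoeff f = 0 := by rwa [← coeff_zero_eq_constantCoeff_apply]
    exact hk (by dsimp only; rw [coeff_pow_eq_zero_of_lt hf' (by omega), smul_zero])

theorem coeff_zero_comp (h f : PowerSeries ℤ) : coeff 0 (comp h f) = coeff 0 h := by
  simp [comp]

theorem comp_one (f : PowerSeries ℤ) : comp 1 f = 1 := by
  ext n
  simp [comp]

theorem comp_X (h : PowerSeries ℤ) : comp h X = h := by
  rw [comp_eq_subst coeff_zero_X, X_subst]

theorem comp_mul {f : PowerSeries ℤ} (hf : coeff 0 f = 0) (u v : PowerSeries ℤ) :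
    comp (u * v) f = comp u f * comp v f := by
  simp only [comp_eq_subst hf, subst_mul (hasSubst_of_coeff_zero hf)]

theorem comp_comp {f v : PowerSeries ℤ} (hv : coeff 0 v = 0) (hf : coeff 0 f = 0)
    (h : PowerSeries ℤ) : comp (comp h v) f = comp h (comp v f) := by
  rw [comp_eq_subst (f := comp v f) (by rwa [coeff_zero_comp])]
  simp only [comp_eq_subst hv, comp_eq_subst hf]
  rw [subst_comp_subst_apply (hasSubst_of_coeff_zero hv) (hasSubst_of_coeff_zero hf)]

theorem X_mul_shift {h : PowerSeries ℤ} (h0 : coeff 0 h = 0) : X * shift h = h := by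
  conv_rhs => rw [eq_X_mul_shift_add_const h, ← coeff_zero_eq_constantCoeff_apply, h0,
    map_zero, add_zero]
  rfl

theorem shift_X : shift (X : PowerSeries ℤ) = 1 := by
  ext n
  simp [shift, coeff_X, coeff_one]

theorem comp_eq_C_add_mul_comp_shift {f : PowerSeries ℤ} (hf : coeff 0 f = 0)
    (u : PowerSeries ℤ) : comp u f = C (coeff 0 u) + f * comp (shift u) f := by
  have hfs := hasSubst_of_coeff_zero hf
  conv_lhs => rw [eq_X_mul_shift_add_const u]
  rw [comp_eq_subst hf, comp_eq_subst hf, subst_add hfs, subst_mul hfs, subst_X hfs, subst_C,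
    add_comm, coeff_zero_eq_constantCoeff_apply]
  rfl

theorem shift_comp {f v : PowerSeries ℤ} (hf : coeff 0 f = 0) (hv : coeff 0 v = 0) :
    shift (comp v f) = shift f * comp (shift v) f := by
  apply mul_left_cancel₀ (X_ne_zero (R := ℤ))
  rw [X_mul_shift (by rwa [coeff_zero_comp]), ← mul_assoc, X_mul_shift hf,
    comp_eq_C_add_mul_comp_shift hf, hv, map_zero, zero_add]

noncomputable def ofRiordan (g f : PowerSeries ℤ) : PowerSeries ℤ × PowerSeries ℤ × PowerSeries ℤ :=
  (g, g * shift f, f)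

theorem ofRiordan_one_X : ofRiordan 1 X = (1, 1, X) := by
  simp [ofRiordan, shift_X]

theorem act_ofRiordan {f : PowerSeries ℤ} (hf : coeff 0 f = 0) (g u : PowerSeries ℤ) :
    act g (g * shift f) f u = g * comp u f := by
  rw [act, comp_eq_C_add_mul_comp_shift hf u]
  linear_combination g * comp (shift u) f * X_mul_shift hf

theorem arMul_ofRiordan {f v : PowerSeries ℤ} (hf : coeff 0 f = 0) (hv : coeff 0 v = 0)
    (g u : PowerSeries ℤ) :
    arMul (ofRiordan g f) (ofRiordan u v) = ofRiordan (g * comp u f) (comp v f) := by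
  simp only [arMul, ofRiordan, act_ofRiordan hf, comp_mul hf, shift_comp hf hv]
  congr 2
  ring

theorem statement9_general (g f fi gi : PowerSeries ℤ)
    (hf0 : coeff 0 f = 0)
    (hfi0 : coeff 0 fi = 0)
    (hffi : comp f fi = X) (hfif : comp fi f = X)
    (hgi : comp g fi * gi = 1) :
    arMul (g, g * shift f, f) (gi, gi * shift fi, fi) = (1, 1, X) ∧
    arMul (gi, gi * shift fi, fi) (g, g * shift f, f) = (1, 1, X) := by
  have hgi_comp : g * comp gi f = 1 := by
    simpa only [comp_mul hf0, comp_comp hfi0 hf0, hfif, comp_X, comp_one] using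
      congrArg (comp · f) hgi
  rw [← ofRiordan_one_X]
  constructor
  · exact (arMul_ofRiordan hf0 hfi0 g gi).trans (by rw [hgi_comp, hfif])
  · exact (arMul_ofRiordan hfi0 hf0 gi g).trans (by rw [mul_comm, hgi, hffi])

/-- `(g, gf/x, f)⁻¹ = (1/(g∘f̄), (1/(g∘f̄))·(f̄/x), f̄)`:
the embedded copy of the Riordan group is closed under inversion.
Here `fi = f̄` and `gi = 1/(g∘f̄)`. -/
theorem statement9 (g f fi gi : PowerSeries ℤ)
    (hg : coeff 0 g = 1) (hf0 : coeff 0 f = 0) (hf1 : coeff 1 f = 1)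
    (hfi0 : coeff 0 fi = 0)
    (hffi : comp f fi = X) (hfif : comp fi f = X)
    (hgi : comp g fi * gi = 1) :
    arMul (g, g * shift f, f) (gi, gi * shift fi, fi) = (1, 1, X) ∧
    arMul (gi, gi * shift fi, fi) (g, g * shift f, f) = (1, 1, X) :=
  statement9_general g f fi gi hf0 hfi0 hffi hfif hgi
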